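/- If every problem f :⊆ ℕ^ℕ ⇉ ℕ^ℕ is either continuous or effectively discontinuous, then for all A, B ⊆ ℕ^ℕ the Wadge game (A,B) is determined, where the Wadge game (A,B) is the Wadge game of the total problem B/A whose graph is (A × B) ∪ ((ℕ^ℕ ∖ A) × (ℕ^ℕ ∖ B)), i.e., Player I or Player II has a winning strategy in this game. -/

import Mathlib

noncomputable section

/-- Baire space `ℕ^ℕ`. -/
abbrev Baire : Type := ℕ → ℕ

/-- The Cantor pairing `⟨n,k⟩ = (n+k)(n+k+1)/2 + k`. -/
def cpair (n k : ℕ) : ℕ := (n + k) * (n + k + 1) / 2 + k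

/-- The inverse of the Cantor pairing. -/
noncomputable def cunpair (m : ℕ) : ℕ × ℕ :=
  Classical.epsilon fun x : ℕ × ℕ => cpair x.1 x.2 = m

/-- A fixed bijective numbering `w : ℕ → List ℕ` of finite words. -/
def word (n : ℕ) : List ℕ := Denumerable.ofNat (List ℕ) n

/-- `l` is a finite prefix of the infinite sequence `p`. -/
def IsPrefixOf (l : List ℕ) (p : Baire) : Prop := l = (List.range l.length).map p

/-- Two words are comparable in the prefix order. -/
def WordComparable (u v : List ℕ) : Prop := u <+: v ∨ v <+: u

/-- The word `w(n_i)` decoded from the `i`-th entry of the code `q`. -/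
noncomputable def wn (q : Baire) (i : ℕ) : List ℕ := word (cunpair (q i)).1

/-- The word `w(k_i)` decoded from the `i`-th entry of the code `q`. -/
noncomputable def wk (q : Baire) (i : ℕ) : List ℕ := word (cunpair (q i)).2

/-- The code `q` is consistent. -/
def ConsistentCode (q : Baire) : Prop :=
  ∀ i j, WordComparable (wn q i) (wn q j) → WordComparable (wk q i) (wk q j)

/-- The continuous partial function `Φ_q :⊆ ℕ^ℕ → ℕ^ℕ` coded by `q`. -/
noncomputable def Phi (q : Baire) : Baire →. Baire := fun p =>
  ⟨ConsistentCode q ∧ ∀ m : ℕ, ∃ i, IsPrefixOf (wn q i) p ∧ m < (wk q i).length,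
   fun _ => Classical.epsilon fun x : Baire =>
      ∀ i, IsPrefixOf (wn q i) p → IsPrefixOf (wk q i) x⟩

/-- The pairing `⟨q,p⟩` on Baire space. -/
def bpair (q p : Baire) : Baire := fun n => if n % 2 = 0 then q (n / 2) else p (n / 2)

/-- Even part of a sequence. -/
def evens (r : Baire) : Baire := fun n => r (2 * n)

/-- Odd part of a sequence. -/
def odds (r : Baire) : Baire := fun n => r (2 * n + 1)

/-- The universal function `U(⟨q,p⟩) = Φ_q(p)`. -/
noncomputable def U : Baire →. Baire := fun r => Phi (evens r) (odds r)

/-- `h` is monotone for the prefix order. -/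
def MonotoneWord (h : List ℕ → List ℕ) : Prop := ∀ u v, u <+: v → h u <+: h v

/-- `h` approximates the partial function `F`. -/
def Approximates (h : List ℕ → List ℕ) (F : Baire →. Baire) : Prop :=
  ∀ p, ∀ hp : (F p).Dom,
    (∀ v, IsPrefixOf v p → IsPrefixOf (h v) ((F p).get hp)) ∧
    (∀ m : ℕ, ∃ v, IsPrefixOf v p ∧ m < (h v).length)

/-- `F :⊆ ℕ^ℕ → ℕ^ℕ` is continuous: some monotone word function approximates it. -/
def ContinuousPF (F : Baire →. Baire) : Prop := ∃ h, MonotoneWord h ∧ Approximates h F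

/-- `F :⊆ ℕ^ℕ → ℕ^ℕ` is computable: some computable monotone word function approximates it. -/
def ComputablePF (F : Baire →. Baire) : Prop :=
  ∃ h, Computable h ∧ MonotoneWord h ∧ Approximates h F

/-- A total function is computable iff it is computable as a partial function with full domain. -/
def ComputableTotal (F : Baire → Baire) : Prop := ComputablePF fun p => Part.some (F p)

/-- A problem (multivalued function on Baire space). -/
abbrev Problem : Type := Baire → Set Baire

/-- `F` is a realizer of the problem `f`. -/
def Realizes (F : Baire →. Baire) (f : Problem) : Prop :=
  ∀ p, (f p).Nonempty → ∃ h : (F p).Dom, (F p).get h ∈ f p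

/-- `f` is continuous: it has a continuous realizer. -/
def ContinuousProblem (f : Problem) : Prop := ∃ F, ContinuousPF F ∧ Realizes F f

/-- The discontinuity problem `DIS`. -/
noncomputable def DIS : Problem := fun p => {q | q ∉ U p}

/-- `D` is a discontinuity function for `f`. -/
def DiscontinuityFunction (D : Baire → Baire) (f : Problem) : Prop :=
  ∀ q, (f (D q)).Nonempty ∧ ∀ y ∈ Phi q (D q), y ∉ f (D q)

/-- `f` is computably discontinuous. -/
def ComputablyDiscontinuous (f : Problem) : Prop :=
  ∃ D, ComputableTotal D ∧ DiscontinuityFunction D f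

/-- `f` is effectively discontinuous. -/
def EffectivelyDiscontinuous (f : Problem) : Prop :=
  ∃ D : Baire → Baire, Continuous D ∧ DiscontinuityFunction D f

/-- Weihrauch reducibility `f ≤_W g`. -/
def WeihrauchRed (f g : Problem) : Prop :=
  ∃ H K : Baire →. Baire, ComputablePF H ∧ ComputablePF K ∧
    ∀ G : Baire →. Baire, Realizes G g →
      Realizes (fun p => (K p).bind fun s => (G s).bind fun t => H (bpair p t)) f

/-- Strong Weihrauch reducibility `f ≤_sW g`. -/
def StrongWeihrauchRed (f g : Problem) : Prop :=
  ∃ H K : Baire →. Baire, ComputablePF H ∧ ComputablePF K ∧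
    ∀ G : Baire →. Baire, Realizes G g →
      Realizes (fun p => (K p).bind fun s => (G s).bind fun t => H t) f

/-- Continuous Weihrauch reducibility `f ≤*_W g`. -/
def ContWeihrauchRed (f g : Problem) : Prop :=
  ∃ H K : Baire →. Baire, ContinuousPF H ∧ ContinuousPF K ∧
    ∀ G : Baire →. Baire, Realizes G g →
      Realizes (fun p => (K p).bind fun s => (G s).bind fun t => H (bpair p t)) f

/-- Continuous strong Weihrauch reducibility `f ≤*_sW g`. -/
def ContStrongWeihrauchRed (f g : Problem) : Prop :=
  ∃ H K : Baire →. Baire, ContinuousPF H ∧ ContinuousPF K ∧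
    ∀ G : Baire →. Baire, Realizes G g →
      Realizes (fun p => (K p).bind fun s => (G s).bind fun t => H t) f

/-- Concatenation of the first `n` moves. -/
def concatN (ms : ℕ → List ℕ) (n : ℕ) : List ℕ := ((List.range n).map ms).flatten

/-- The concatenated play is infinite. -/
def PlayInf (ms : ℕ → List ℕ) : Prop := ∀ m : ℕ, ∃ n, m < (concatN ms n).length

/-- The infinite sequence determined by an infinite play. -/
noncomputable def playLim (ms : ℕ → List ℕ) : Baire :=
  Classical.epsilon fun p : Baire => ∀ n, IsPrefixOf (concatN ms n) p

/-- Player II wins the run of the Wadge game of `f` given by the moves `xs` of I and `ys` of II. -/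
def WadgeIIWins (f : Problem) (xs ys : ℕ → List ℕ) : Prop :=
  (PlayInf xs ∧ (f (playLim xs)).Nonempty) → (PlayInf ys ∧ playLim ys ∈ f (playLim xs))

/-- The list of first `n` moves. -/
def histW (xs : ℕ → List ℕ) (n : ℕ) : List (List ℕ) := (List.range n).map xs

/-- `σ` is a winning strategy for Player II in the Wadge game of `f`. -/
def WadgeWinningII (f : Problem) (σ : List (List ℕ) → List ℕ) : Prop :=
  ∀ xs : ℕ → List ℕ, WadgeIIWins f xs fun i => σ (histW xs (i + 1))

/-- `σ` is a winning strategy for Player I in the Wadge game of `f`. -/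
def WadgeWinningI (f : Problem) (σ : List (List ℕ) → List ℕ) : Prop :=
  ∀ ys : ℕ → List ℕ, ¬ WadgeIIWins f (fun i => σ (histW ys i)) ys

/-- The list of first `n` values of a sequence. -/
def histN (x : Baire) (n : ℕ) : List ℕ := (List.range n).map x

/-- Player II wins the run `(x,y)` of the Lipschitz game of `f`. -/
def LipIIWins (f : Problem) (x y : Baire) : Prop := (f x).Nonempty → y ∈ f x

/-- `σ` is a winning strategy for Player II in the Lipschitz game of `f`. -/
def LipWinningII (f : Problem) (σ : List ℕ → ℕ) : Prop :=
  ∀ x : Baire, LipIIWins f x fun i => σ (histN x (i + 1))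

/-- `σ` is a winning strategy for Player I in the Lipschitz game of `f`. -/
def LipWinningI (f : Problem) (σ : List ℕ → ℕ) : Prop :=
  ∀ y : Baire, ¬ LipIIWins f (fun i => σ (histN y i)) y

/-- `σ` is a winning strategy for Player II in the Gale–Stewart game `A`. -/
def GSWinningII (A : Set Baire) (σ : List ℕ → ℕ) : Prop :=
  ∀ x : Baire, bpair x (fun i => σ (histN x (i + 1))) ∈ A

/-- `σ` is a winning strategy for Player I in the Gale–Stewart game `A`. -/
def GSWinningI (A : Set Baire) (σ : List ℕ → ℕ) : Prop :=
  ∀ y : Baire, bpair (fun i => σ (histN y i)) y ∉ A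

/-- The totalization `Tf` of `f`. -/
def Totalization (f : Problem) : Problem := fun p => {q | (f p).Nonempty → q ∈ f p}

/-- The paired graph `⟨graph(Tf)⟩ ⊆ ℕ^ℕ`. -/
def pairedGraph (f : Problem) : Set Baire :=
  {r | ∃ x y : Baire, r = bpair x y ∧ y ∈ Totalization f x}

/-- Domain of the word concatenation map `w*`. -/
def wstarDom (p : Baire) : Prop := PlayInf fun i => word (p i)

/-- The word concatenation map `w* : p ↦ w(p 0) w(p 1) ⋯` (on its domain). -/
noncomputable def wstar (p : Baire) : Baire := playLim fun i => word (p i)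

/-- The problem `f^w = w*⁻¹ ∘ f ∘ w*`. -/
noncomputable def wordLift (f : Problem) : Problem := fun p =>
  {q | wstarDom p ∧ (f (wstar p)).Nonempty ∧ wstarDom q ∧ wstar q ∈ f (wstar p)}

/-- The `i`-th component of a tupled sequence. -/
def tupleComp (p : Baire) (i : ℕ) : Baire := fun n => p (cpair i n)

/-- The parallelization `⟨f⟩` of `f`. -/
def Parallelization (f : Problem) : Problem := fun p =>
  {q | ∀ i, tupleComp q i ∈ f (tupleComp p i)}

/-- Turing reducibility: `p` is computable relative to the oracle `q`. -/
def TuringLe (p q : Baire) : Prop := ∃ F : Baire →. Baire, ComputablePF F ∧ p ∈ F q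

end

/-!
Apply the hypothesis to the problem `f` with graph `(A × B) ∪ (Aᶜ × Bᶜ)`.

If `f` has a continuous realizer `F`, Player II wins by playing, after each move of I, the part
of `F(x)` that the moves of I so far already determine.

If `f` is effectively discontinuous via `D`, Player I plays `D(q)` for a code `q` that is built
during the play: its `i`-th entry pairs the part of `D(q)` determined by the first `i` entries of
`q` with the moves of II so far. Then `Φ_q` maps `D(q)` to the play `y` of II, and `D` guarantees
`Φ_q(D(q)) ∉ f(D(q))`.
-/

open Set PiNat

lemma cpair_lt_cpair {a b c d : ℕ} (h : a + b < c + d) : cpair a b < cpair c d := by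
  have tri_succ (s : ℕ) : (s + 1) * (s + 2) / 2 = s * (s + 1) / 2 + (s + 1) := by
    rw [show (s + 1) * (s + 2) = s * (s + 1) + (s + 1) * 2 by ring,
      Nat.add_mul_div_right _ _ two_pos]
  have : (a + b + 1) * (a + b + 2) / 2 ≤ (c + d) * (c + d + 1) / 2 :=
    Nat.div_le_div_right (Nat.mul_le_mul h (by omega))
  rw [tri_succ] at this
  unfold cpair
  omega

lemma cpair_injective {a b c d : ℕ} (h : cpair a b = cpair c d) : a = c ∧ b = d := by
  have hsum : a + b = c + d := by
    rcases lt_trichotomy (a + b) (c + d) with hlt | heq | hgt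
    · exact absurd h (cpair_lt_cpair hlt).ne
    · exact heq
    · exact absurd h (cpair_lt_cpair hgt).ne'
  unfold cpair at h
  rw [hsum] at h
  omega

lemma cunpair_cpair (n k : ℕ) : cunpair (cpair n k) = (n, k) :=
  have h := cpair_injective
    (Classical.epsilon_spec (p := fun x : ℕ × ℕ => cpair x.1 x.2 = cpair n k) ⟨(n, k), rfl⟩)
  Prod.ext h.1 h.2

lemma wn_wk_of_eq_cpair {q : Baire} {i : ℕ} {u v : List ℕ}
    (h : q i = cpair (Encodable.encode u) (Encodable.encode v)) : wn q i = u ∧ wk q i = v := by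
  simp [wn, wk, h, cunpair_cpair, word]

lemma isPrefixOf_iff_getElem {l : List ℕ} {p : Baire} :
    IsPrefixOf l p ↔ ∀ j (hj : j < l.length), l[j] = p j := by
  simp [IsPrefixOf, List.ext_getElem_iff]

lemma isPrefixOf_nil (p : Baire) : IsPrefixOf [] p := rfl

lemma length_histN (p : Baire) (n : ℕ) : (histN p n).length = n := by
  simp [histN]

lemma isPrefixOf_histN (p : Baire) (n : ℕ) : IsPrefixOf (histN p n) p := by
  simp [isPrefixOf_iff_getElem, histN]

lemma IsPrefixOf.of_prefix {u v : List ℕ} {p : Baire} (hv : IsPrefixOf v p) (huv : u <+: v) :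
    IsPrefixOf u p :=
  isPrefixOf_iff_getElem.2 fun j hj => by
    rw [huv.getElem hj, isPrefixOf_iff_getElem.1 hv]

lemma IsPrefixOf.prefix_of_length_le {u v : List ℕ} {p : Baire} (hu : IsPrefixOf u p)
    (hv : IsPrefixOf v p) (hlen : u.length ≤ v.length) : u <+: v := by
  refine List.prefix_iff_getElem.2 ⟨hlen, fun j hj => ?_⟩
  rw [isPrefixOf_iff_getElem.1 hu, isPrefixOf_iff_getElem.1 hv]

lemma eq_of_forall_isPrefixOf {ι : Type*} {w : ι → List ℕ} (hw : ∀ k, ∃ i, k < (w i).length)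
    {p p' : Baire} (hp : ∀ i, IsPrefixOf (w i) p) (hp' : ∀ i, IsPrefixOf (w i) p') : p = p' := by
  funext k
  obtain ⟨i, hk⟩ := hw k
  rw [← isPrefixOf_iff_getElem.1 (hp i) k hk, isPrefixOf_iff_getElem.1 (hp' i) k hk]

lemma isPrefixOf_histN_iff {x p : Baire} {n : ℕ} :
    IsPrefixOf (histN x n) p ↔ p ∈ cylinder x n := by
  simp [isPrefixOf_iff_getElem, histN, eq_comm]

def zeroExtend (l : List ℕ) : Baire := fun j => l.getD j 0

lemma histN_zeroExtend (l : List ℕ) : histN (zeroExtend l) l.length = l :=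
  List.ext_getElem (length_histN _ _) fun j _ hj => by
    simp [histN, zeroExtend, List.getElem?_eq_getElem hj]

lemma isPrefixOf_iff_mem_cylinder {l : List ℕ} {p : Baire} :
    IsPrefixOf l p ↔ p ∈ cylinder (zeroExtend l) l.length := by
  have h := @isPrefixOf_histN_iff (zeroExtend l) p l.length
  rwa [histN_zeroExtend] at h

lemma isPrefixOf_zeroExtend (l : List ℕ) : IsPrefixOf l (zeroExtend l) :=
  isPrefixOf_iff_mem_cylinder.2 (self_mem_cylinder _ _)

lemma mem_Phi_of_isPrefixOf {q p y : Baire} (hdom : (Phi q p).Dom)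
    (hy : ∀ i, IsPrefixOf (wn q i) p → IsPrefixOf (wk q i) y) : y ∈ Phi q p := by
  have hlim := Classical.epsilon_spec
    (p := fun x => ∀ i, IsPrefixOf (wn q i) p → IsPrefixOf (wk q i) x) ⟨y, hy⟩
  refine ⟨hdom, eq_of_forall_isPrefixOf (w := fun i : {i // IsPrefixOf (wn q i) p} => wk q i)
    (fun k => ?_) (fun i => hlim i i.2) (fun i => hy i i.2)⟩
  obtain ⟨i, hi, hk⟩ := hdom.2 k
  exact ⟨⟨i, hi⟩, hk⟩

lemma Continuous.exists_mapsTo_cylinder {E F : ℕ → Type*} [∀ n, TopologicalSpace (E n)]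
    [∀ n, DiscreteTopology (E n)] [∀ n, TopologicalSpace (F n)] [∀ n, DiscreteTopology (F n)]
    {D : (∀ n, E n) → ∀ n, F n} (hD : Continuous D) (q : ∀ n, E n) (m : ℕ) :
    ∃ n, MapsTo D (cylinder q n) (cylinder (D q) m) := by
  obtain ⟨_, ⟨x, n, rfl⟩, hq, hsub⟩ := (isTopologicalBasis_cylinders E).exists_subset_of_mem_open
    (self_mem_cylinder (D q) m) ((isOpen_cylinder F _ _).preimage hD)
  exact ⟨n, by rwa [← mem_cylinder_iff_eq.1 hq] at hsub⟩

section Plays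

variable (ms : ℕ → List ℕ)

lemma concatN_succ (n : ℕ) : concatN ms (n + 1) = concatN ms n ++ ms n := by
  simp [concatN, List.range_succ]

lemma concatN_succ' (n : ℕ) : concatN ms (n + 1) = ms 0 ++ concatN (fun i => ms (i + 1)) n := by
  simp [concatN, List.range_succ_eq_map, Function.comp_def]

lemma concatN_prefix {m n : ℕ} (h : m ≤ n) : concatN ms m <+: concatN ms n := by
  induction n, h using Nat.le_induction with
  | base => exact List.prefix_refl _
  | succ n _ ih => exact ih.trans (concatN_succ ms n ▸ List.prefix_append _ _)

variable {ms}

lemma exists_forall_isPrefixOf_concatN (hinf : PlayInf ms) :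
    ∃ p : Baire, ∀ n, IsPrefixOf (concatN ms n) p := by
  choose N hN using hinf
  refine ⟨fun k => (concatN ms (N k)).getD k 0, fun n => isPrefixOf_iff_getElem.2 fun j hj => ?_⟩
  rw [List.getD_eq_getElem _ _ (hN j)]
  rcases le_total n (N j) with h | h
  · exact (concatN_prefix ms h).getElem hj
  · exact ((concatN_prefix ms h).getElem (hN j)).symm

lemma isPrefixOf_concatN_playLim (hinf : PlayInf ms) (n : ℕ) :
    IsPrefixOf (concatN ms n) (playLim ms) :=
  Classical.epsilon_spec (exists_forall_isPrefixOf_concatN hinf) n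

lemma playLim_eq (hinf : PlayInf ms) {p : Baire} (hp : ∀ n, IsPrefixOf (concatN ms n) p) :
    playLim ms = p :=
  eq_of_forall_isPrefixOf hinf (isPrefixOf_concatN_playLim hinf) hp

lemma exists_prefix_concatN (hinf : PlayInf ms) {v : List ℕ} (hv : IsPrefixOf v (playLim ms)) :
    ∃ n, v <+: concatN ms n := by
  obtain ⟨n, hn⟩ := hinf v.length
  exact ⟨n, hv.prefix_of_length_le (isPrefixOf_concatN_playLim hinf n) hn.le⟩

lemma histW_succ (n : ℕ) : histW ms (n + 1) = histW ms n ++ [ms n] := by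
  simp [histW, List.range_succ]

end Plays

def incrementalStrategy (G : List (List ℕ) → List ℕ) : List (List ℕ) → List ℕ :=
  fun l => (G l).drop (G l.dropLast).length

lemma concatN_incrementalStrategy {G : List (List ℕ) → List ℕ} (ms : ℕ → List ℕ)
    (h0 : G [] = []) (hmono : ∀ n, G (histW ms n) <+: G (histW ms (n + 1))) (n : ℕ) :
    concatN (fun i => incrementalStrategy G (histW ms (i + 1))) n = G (histW ms n) := by
  induction n with
  | zero => exact h0.symm
  | succ n ih =>
    rw [concatN_succ, ih, incrementalStrategy, histW_succ, List.dropLast_concat, ← histW_succ]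
    exact List.prefix_iff_eq_append.1 (hmono n)

def replyStrategy (h : List ℕ → List ℕ) : List (List ℕ) → List ℕ :=
  incrementalStrategy fun l => if l = [] then [] else h l.flatten

lemma concatN_replyStrategy {h : List ℕ → List ℕ} (hmono : MonotoneWord h) (xs : ℕ → List ℕ)
    (n : ℕ) :
    concatN (fun i => replyStrategy h (histW xs (i + 1))) (n + 1) = h (concatN xs (n + 1)) := by
  have hG (n : ℕ) : (if histW xs (n + 1) = [] then [] else h (histW xs (n + 1)).flatten)
      = h (concatN xs (n + 1)) :=
    if_neg (List.ne_nil_of_length_pos (by simp [histW]))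
  rw [replyStrategy, concatN_incrementalStrategy xs rfl, hG]
  rintro (_ | n)
  · exact List.nil_prefix
  · rw [hG, hG]
    exact hmono _ _ (concatN_prefix xs n.succ.le_succ)

theorem wadgeWinningII_of_continuousProblem {f : Problem} (hf : ContinuousProblem f) :
    ∃ σ, WadgeWinningII f σ := by
  obtain ⟨F, ⟨h, hmono, happ⟩, hreal⟩ := hf
  refine ⟨replyStrategy h, fun xs => ?_⟩
  rintro ⟨hxinf, hne⟩
  obtain ⟨hF, hFf⟩ := hreal _ hne
  obtain ⟨happ_prefix, happ_unbounded⟩ := happ _ hF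
  set ys := fun i => replyStrategy h (histW xs (i + 1))
  have hyinf : PlayInf ys := by
    intro m
    obtain ⟨v, hv, hm⟩ := happ_unbounded m
    obtain ⟨n, hvn⟩ := exists_prefix_concatN hxinf hv
    refine ⟨n + 1, ?_⟩
    rw [concatN_replyStrategy hmono]
    exact hm.trans_le (hmono _ _ (hvn.trans (concatN_prefix xs n.le_succ))).length_le
  have hprefix : ∀ n, IsPrefixOf (concatN ys n) ((F (playLim xs)).get hF)
    | 0 => isPrefixOf_nil _
    | n + 1 => by
      rw [concatN_replyStrategy hmono]
      exact happ_prefix _ (isPrefixOf_concatN_playLim hxinf _)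
  exact ⟨hyinf, playLim_eq hyinf hprefix ▸ hFf⟩

section DiscontinuousCase

variable (D : Baire → Baire)

def DeterminesOutput (l : List ℕ) (L : ℕ) : Prop :=
  MapsTo D (cylinder (zeroExtend l) l.length) (cylinder (D (zeroExtend l)) L)

open Classical in
/-- Capped at `l.length` only to make it finite. -/
noncomputable def outLength (l : List ℕ) : ℕ :=
  Nat.findGreatest (DeterminesOutput D l) l.length

noncomputable def determinedOutput (l : List ℕ) : List ℕ :=
  histN (D (zeroExtend l)) (outLength D l)

lemma determinesOutput_outLength (l : List ℕ) : DeterminesOutput D l (outLength D l) := by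
  classical
  exact Nat.findGreatest_spec (P := DeterminesOutput D l) (Nat.zero_le _)
    (by simp [DeterminesOutput])

lemma length_determinedOutput (l : List ℕ) : (determinedOutput D l).length = outLength D l :=
  length_histN _ _

lemma determinedOutput_nil : determinedOutput D [] = [] := by
  simp [determinedOutput, outLength, histN]

lemma determinedOutput_isPrefixOf {l : List ℕ} {q : Baire} (hq : IsPrefixOf l q) :
    IsPrefixOf (determinedOutput D l) (D q) :=
  isPrefixOf_histN_iff.2 (determinesOutput_outLength D l (isPrefixOf_iff_mem_cylinder.1 hq))

lemma outLength_mono {l l' : List ℕ} (h : l <+: l') : outLength D l ≤ outLength D l' := by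
  classical
  refine Nat.le_findGreatest ((Nat.findGreatest_le _).trans h.length_le) ?_
  have hsub : cylinder (zeroExtend l') l'.length ⊆ cylinder (zeroExtend l) l.length :=
    fun p hp => isPrefixOf_iff_mem_cylinder.1 ((isPrefixOf_iff_mem_cylinder.2 hp).of_prefix h)
  rw [DeterminesOutput,
    mem_cylinder_iff_eq.1 (determinesOutput_outLength D l (hsub (self_mem_cylinder _ _)))]
  exact (determinesOutput_outLength D l).mono_left hsub

lemma determinedOutput_prefix {l l' : List ℕ} (h : l <+: l') :
    determinedOutput D l <+: determinedOutput D l' :=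
  (determinedOutput_isPrefixOf D ((isPrefixOf_zeroExtend l').of_prefix h)).prefix_of_length_le
    (determinedOutput_isPrefixOf D (isPrefixOf_zeroExtend l'))
    (by simpa only [length_determinedOutput] using outLength_mono D h)

lemma exists_le_outLength (hD : Continuous D) (q : Baire) (m : ℕ) :
    ∃ n, m ≤ outLength D (histN q n) := by
  classical
  obtain ⟨n, hn⟩ := hD.exists_mapsTo_cylinder q m
  refine ⟨max n m, Nat.le_findGreatest (by simp [length_histN]) ?_⟩
  have hcyl : cylinder (zeroExtend (histN q (max n m))) (histN q (max n m)).length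
      = cylinder q (max n m) := by
    rw [← mem_cylinder_iff_eq.1 (isPrefixOf_iff_mem_cylinder.1 (isPrefixOf_histN q _)),
      length_histN]
  have hmaps : MapsTo D (cylinder q (max n m)) (cylinder (D q) m) :=
    hn.mono_left (cylinder_anti q (le_max_left n m))
  rw [DeterminesOutput, hcyl, mem_cylinder_iff_eq.1 (hmaps (hcyl ▸ self_mem_cylinder _ _))]
  exact hmaps

noncomputable def diagonalEntry (c y : List ℕ) : ℕ :=
  cpair (Encodable.encode (determinedOutput D c)) (Encodable.encode y)

noncomputable def diagonalCodePrefix (ys : ℕ → List ℕ) : ℕ → List ℕ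
  | 0 => []
  | i + 1 => diagonalCodePrefix ys i ++
      [diagonalEntry D (diagonalCodePrefix ys i) (concatN ys (i + 1))]

noncomputable def diagonalCode (ys : ℕ → List ℕ) : Baire := fun i =>
  diagonalEntry D (diagonalCodePrefix D ys i) (concatN ys (i + 1))

lemma histN_diagonalCode (ys : ℕ → List ℕ) (n : ℕ) :
    histN (diagonalCode D ys) n = diagonalCodePrefix D ys n := by
  induction n with
  | zero => rfl
  | succ n ih => simp [histN, List.range_succ, ← ih, diagonalCodePrefix, diagonalCode]

lemma diagonalCodePrefix_congr {ys ys' : ℕ → List ℕ} {n : ℕ} (h : ∀ j < n, ys j = ys' j) :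
    diagonalCodePrefix D ys n = diagonalCodePrefix D ys' n := by
  induction n with
  | zero => rfl
  | succ n ih =>
    have hconcat : concatN ys (n + 1) = concatN ys' (n + 1) :=
      congrArg List.flatten (List.map_congr_left fun j hj => h j (by simpa using hj))
    rw [diagonalCodePrefix, diagonalCodePrefix, ih fun j hj => h j (by omega), hconcat]

noncomputable def diagonalStrategy : List (List ℕ) → List ℕ :=
  incrementalStrategy fun l =>
    determinedOutput D (diagonalCodePrefix D (fun j => l.getD j []) l.length)

lemma concatN_diagonalStrategy (ys : ℕ → List ℕ) (n : ℕ) :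
    concatN (fun i => diagonalStrategy D (histW ys i)) (n + 1)
      = determinedOutput D (histN (diagonalCode D ys) n) := by
  have hG (n : ℕ) : determinedOutput D
      (diagonalCodePrefix D (fun j => (histW ys n).getD j []) (histW ys n).length)
      = determinedOutput D (diagonalCodePrefix D ys n) := by
    rw [show (histW ys n).length = n by simp [histW]]
    exact congrArg _ (diagonalCodePrefix_congr D fun j hj => by simp [histW, hj])
  rw [concatN_succ', diagonalStrategy, concatN_incrementalStrategy ys (determinedOutput_nil D),
    hG, histN_diagonalCode]
  · simp [incrementalStrategy, histW]
  · intro n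
    rw [hG, hG]
    exact determinedOutput_prefix D (List.prefix_append _ _)

lemma playLim_diagonalStrategy (hD : Continuous D) (ys : ℕ → List ℕ) :
    PlayInf (fun i => diagonalStrategy D (histW ys i)) ∧
      playLim (fun i => diagonalStrategy D (histW ys i)) = D (diagonalCode D ys) := by
  have hinf : PlayInf (fun i => diagonalStrategy D (histW ys i)) := fun m => by
    obtain ⟨n, hn⟩ := exists_le_outLength D hD (diagonalCode D ys) (m + 1)
    refine ⟨n + 1, ?_⟩
    rw [concatN_diagonalStrategy, length_determinedOutput]
    omega
  refine ⟨hinf, playLim_eq hinf fun n => ?_⟩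
  cases n with
  | zero => exact isPrefixOf_nil _
  | succ n =>
    rw [concatN_diagonalStrategy]
    exact determinedOutput_isPrefixOf D (isPrefixOf_histN _ n)

lemma playLim_mem_Phi_diagonalCode {ys : ℕ → List ℕ} (hys : PlayInf ys) :
    playLim ys ∈ Phi (diagonalCode D ys) (D (diagonalCode D ys)) := by
  set q := diagonalCode D ys
  have hentry (i : ℕ) : wn q i = determinedOutput D (histN q i) ∧ wk q i = concatN ys (i + 1) :=
    wn_wk_of_eq_cpair (by rw [histN_diagonalCode]; rfl)
  have hwn (i : ℕ) : IsPrefixOf (wn q i) (D q) :=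
    (hentry i).1 ▸ determinedOutput_isPrefixOf D (isPrefixOf_histN q i)
  refine mem_Phi_of_isPrefixOf ⟨fun i j _ => ?_, fun m => ?_⟩
    fun i _ => (hentry i).2 ▸ isPrefixOf_concatN_playLim hys (i + 1)
  · rw [WordComparable, (hentry i).2, (hentry j).2]
    rcases le_total i j with h | h
    · exact Or.inl (concatN_prefix ys (by omega))
    · exact Or.inr (concatN_prefix ys (by omega))
  · obtain ⟨n, hn⟩ := hys m
    exact ⟨n, hwn n, (hentry n).2 ▸ hn.trans_le (concatN_prefix ys n.le_succ).length_le⟩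

end DiscontinuousCase

theorem wadgeWinningI_of_effectivelyDiscontinuous {f : Problem}
    (hf : EffectivelyDiscontinuous f) : ∃ σ, WadgeWinningI f σ := by
  obtain ⟨D, hD, hdisc⟩ := hf
  refine ⟨diagonalStrategy D, fun ys hwin => ?_⟩
  obtain ⟨hxinf, hx⟩ := playLim_diagonalStrategy D hD ys
  obtain ⟨hne, hnot⟩ := hdisc (diagonalCode D ys)
  obtain ⟨hyinf, hy⟩ := hwin ⟨hxinf, hx ▸ hne⟩
  exact hnot _ (playLim_mem_Phi_diagonalCode D hyinf) (hx ▸ hy)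

/-- Weihrauch determinacy implies Wadge determinacy. -/
theorem weihrauch_determinacy_implies_wadge_determinacy
    (h : ∀ f : Problem, ContinuousProblem f ∨ EffectivelyDiscontinuous f)
    (A B : Set Baire) :
    (∃ σ : List (List ℕ) → List ℕ,
        WadgeWinningI (fun p => {q | (p ∈ A ∧ q ∈ B) ∨ (p ∉ A ∧ q ∉ B)}) σ) ∨
    (∃ σ : List (List ℕ) → List ℕ,
        WadgeWinningII (fun p => {q | (p ∈ A ∧ q ∈ B) ∨ (p ∉ A ∧ q ∉ B)}) σ) :=
  (h _).symm.imp wadgeWinningI_of_effectivelyDiscontinuous wadgeWinningII_of_continuousProblem
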